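/- arXiv:2306.16720 — 4 statements merged into one kernel-verified Lean document; each statement's English description precedes it below -/
import Mathlib

section
/- Let n ≥ 1, t ∈ [0,1] and let A be any n×n complex matrix. Then there exists ε > 0 such that for all complex z with |z| < ε, the series Σ_{k≥1} Tr[P_k^{(t)}(A)] z^k/k converges and det(I_n + t z² − z A) = exp( − Σ_{k≥1} Tr[P_k^{(t)}(A)] z^k / k ), where P_k^{(t)}(A) denotes the evaluation of the polynomial P_k^{(t)} at the matrix A. -/
open Polynomial Matrix

/-- The modified Chebyshev polynomials in `ℂ[X]` for a real parameter `t`: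
`P₀ = 2`, `P₁ = X`, `P_{k+2} = X·P_{k+1} − t·P_k`. -/
noncomputable def modCheb (t : ℝ) : ℕ → Polynomial ℂ
  | 0 => 2
  | 1 => Polynomial.X
  | (k + 2) => Polynomial.X * modCheb t (k + 1) - Polynomial.C (t : ℂ) * modCheb t k

/-!
Over `ℂ` everything reduces to eigenvalues counted with algebraic multiplicity:
`tr p(A) = ∑ μ, p(μ)` (on the generalized eigenspace of `μ`, `A - μ` is nilpotent) and
`det(c - zA) = ∏ μ, (c - zμ)`. For one eigenvalue write `μ = α + β` with `αβ = t`; then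
`P_k(μ) = α^k + β^k`, so for small `z` the series `∑ P_k(μ) z^k/k` is
`-log(1 - αz) - log(1 - βz) = -log(1 - μz + tz²)`.
-/

open Filter Topology Module

namespace LinearMap

variable {K V : Type*} [Field K] [AddCommGroup V] [Module K V]

theorem aeval_restrict {f : End K V} {W : Submodule K V} (hf : Set.MapsTo f W W) (p : K[X])
    (hp : Set.MapsTo (aeval f p) W W) :
    aeval (f.restrict hf) p = (aeval f p).restrict hp := by
  ext x
  change (aeval (f.restrict hf) p x : V) = aeval f p x
  clear hp
  induction p using Polynomial.induction_on' with
  | add p q hp hq => simp [hp, hq]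
  | monomial n a => simp [aeval_monomial, Module.End.pow_restrict n hf]

theorem trace_aeval_of_isNilpotent_sub_algebraMap [FiniteDimensional K V] {f : End K V} {μ : K}
    (hf : IsNilpotent (f - algebraMap K (End K V) μ)) (p : K[X]) :
    trace K V (aeval f p) = finrank K V * p.eval μ := by
  obtain ⟨q, hq⟩ : X - C μ ∣ p - C (p.eval μ) := by
    rw [dvd_iff_isRoot]; simp
  have hroot : aeval f (X - C μ) = f - algebraMap K (End K V) μ := by simp
  have hsplit : aeval f p = aeval f (X - C μ) * aeval f q + p.eval μ • 1 := by
    rw [← map_mul, ← hq, map_sub, aeval_C, Algebra.algebraMap_eq_smul_one, sub_add_cancel]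
  have hcomm : Commute (aeval f (X - C μ)) (aeval f q) := (Commute.all _ _).map (aeval f)
  have htrace : trace K V (aeval f (X - C μ) * aeval f q) = 0 :=
    (isNilpotent_trace_of_isNilpotent (hcomm.isNilpotent_mul_right (hroot ▸ hf))).eq_zero
  rw [hsplit, map_add, htrace, map_smul, trace_one, smul_eq_mul, zero_add, mul_comm]

theorem trace_aeval_eq_sum_roots_charpoly [IsAlgClosed K] [FiniteDimensional K V] (f : End K V)
    (p : K[X]) : trace K V (aeval f p) = (f.charpoly.roots.map p.eval).sum := by
  classical
  have hint : DirectSum.IsInternal f.maxGenEigenspace :=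
    DirectSum.isInternal_submodule_of_iSupIndep_of_iSup_eq_top f.independent_maxGenEigenspace
      f.iSup_maxGenEigenspace_eq_top
  have hfin : {μ | f.maxGenEigenspace μ ≠ ⊥}.Finite :=
    WellFoundedGT.finite_ne_bot_of_iSupIndep f.independent_maxGenEigenspace
  have hsupp : hfin.toFinset = f.charpoly.roots.toFinset := by
    ext μ
    simp [← Submodule.finrank_eq_zero, finrank_maxGenEigenspace_eq, f.charpoly_monic.ne_zero]
  have hblock (μ : K) (hp : Set.MapsTo (aeval f p) (f.maxGenEigenspace μ) (f.maxGenEigenspace μ)) :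
      trace K _ ((aeval f p).restrict hp) = f.charpoly.roots.count μ * p.eval μ := by
    have hf := f.mapsTo_maxGenEigenspace_of_comm rfl μ
    have hnil : IsNilpotent (f.restrict hf - algebraMap K _ μ) := by
      convert f.isNilpotent_restrict_maxGenEigenspace_sub_algebraMap μ
      ext; simp; rfl
    rw [← aeval_restrict hf, trace_aeval_of_isNilpotent_sub_algebraMap hnil,
      finrank_maxGenEigenspace_eq, count_roots]
  have hcomm : Commute f (aeval f p) := by
    simpa using (Commute.all X p).map (aeval f)
  rw [trace_eq_sum_trace_restrict' hint hfin (f.mapsTo_maxGenEigenspace_of_comm hcomm),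
    Finset.sum_multiset_map_count, ← hsupp]
  exact Finset.sum_congr rfl fun μ _ ↦ (hblock μ _).trans (nsmul_eq_mul _ _).symm

end LinearMap

namespace Matrix

variable {K n : Type*} [Field K] [IsAlgClosed K] [Fintype n] [DecidableEq n]

theorem trace_aeval_eq_sum_roots_charpoly (A : Matrix n n K) (p : K[X]) :
    (aeval A p).trace = (A.charpoly.roots.map p.eval).sum := by
  rw [← trace_toLin'_eq, ← charpoly_toLin', ← LinearMap.trace_aeval_eq_sum_roots_charpoly]
  exact congrArg _ (aeval_algHom_apply toLinAlgEquiv' A p).symm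

theorem card_roots_charpoly (A : Matrix n n K) :
    Multiset.card A.charpoly.roots = Fintype.card n := by
  rw [IsAlgClosed.card_roots_eq_natDegree, charpoly_natDegree_eq_dim]

theorem det_smul_one_sub_smul_eq_prod_roots_charpoly (A : Matrix n n K) (c z : K) :
    (c • 1 - z • A).det = (A.charpoly.roots.map fun μ ↦ c - z * μ).prod := by
  rcases eq_or_ne z 0 with rfl | hz
  · simp [card_roots_charpoly]
  have hfactor : c • (1 : Matrix n n K) - z • A = z • ((c / z) • 1 - A) := by
    rw [smul_sub, smul_smul, mul_div_cancel₀ _ hz]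
  have heval : ((c / z) • (1 : Matrix n n K) - A).det = A.charpoly.eval (c / z) := by
    rw [eval_charpoly, smul_one_eq_diagonal]; rfl
  rw [hfactor, det_smul, heval,
    (IsAlgClosed.splits A.charpoly).eval_eq_prod_roots_of_monic A.charpoly_monic,
    ← A.card_roots_charpoly, ← Multiset.prod_replicate, ← Multiset.map_const',
    ← Multiset.prod_map_mul]
  congr 1
  refine Multiset.map_congr rfl fun μ _ ↦ ?_
  field_simp

end Matrix

theorem Multiset.hasSum_sum_map {ι β α : Type*} [AddCommMonoid α] [TopologicalSpace α]
    [ContinuousAdd α] {f : ι → β → α} {a : ι → α} (s : Multiset ι)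
    (h : ∀ i ∈ s, HasSum (f i) (a i)) :
    HasSum (fun b ↦ (s.map fun i ↦ f i b).sum) (s.map a).sum := by
  induction s using Multiset.induction_on with
  | empty => simp [hasSum_zero]
  | cons i s ih =>
    simpa using (h i (mem_cons_self i s)).add (ih fun j hj ↦ h j (mem_cons_of_mem hj))

theorem Complex.log_mul_of_re_pos {x y : ℂ} (hx : 0 < x.re) (hy : 0 < y.re) :
    log (x * y) = log x + log y := by
  have hargx := abs_lt.1 (abs_arg_lt_pi_div_two_iff.2 (Or.inl hx))
  have hargy := abs_lt.1 (abs_arg_lt_pi_div_two_iff.2 (Or.inl hy))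
  refine log_mul (fun h ↦ by simp [h] at hx) (fun h ↦ by simp [h] at hy) ⟨?_, ?_⟩ <;> linarith

theorem Complex.re_one_sub_pos {u : ℂ} (hu : ‖u‖ < 1) : 0 < (1 - u).re := by
  have := re_le_norm u
  simp only [sub_re, one_re]
  linarith

theorem exists_add_eq_mul_eq {K : Type*} [Field K] [IsAlgClosed K] (s p : K) :
    ∃ α β : K, α + β = s ∧ α * β = p := by
  obtain ⟨α, hα⟩ := IsAlgClosed.exists_root (X ^ 2 - C s * X + C p) (by
    rw [show (X ^ 2 - C s * X + C p : K[X]).degree = 2 by compute_degree!]; decide)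
  refine ⟨α, s - α, by ring, ?_⟩
  simp only [IsRoot, eval_add, eval_sub, eval_pow, eval_mul, eval_X, eval_C] at hα
  linear_combination -hα

theorem modCheb_eval_add (t : ℝ) {α β : ℂ} (h : α * β = t) (k : ℕ) :
    (modCheb t k).eval (α + β) = α ^ k + β ^ k := by
  induction k using Nat.twoStepInduction with
  | zero => norm_num [modCheb]
  | one => simp [modCheb]
  | more k ih₀ ih₁ =>
    simp only [modCheb, eval_sub, eval_mul, eval_X, eval_C, ih₀, ih₁, ← h]
    ring

theorem eventually_hasSum_modCheb_eval (t : ℝ) (μ : ℂ) :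
    ∀ᶠ z in 𝓝 (0 : ℂ), HasSum (fun k : ℕ ↦ (modCheb t (k + 1)).eval μ * z ^ (k + 1) / (k + 1))
      (-Complex.log (1 + t * z ^ 2 - z * μ)) := by
  obtain ⟨α, β, rfl, hαβ⟩ := exists_add_eq_mul_eq μ (t : ℂ)
  have hsmall (γ : ℂ) : ∀ᶠ z in 𝓝 (0 : ℂ), ‖γ * z‖ < 1 := by
    have : Tendsto (fun z ↦ ‖γ * z‖) (𝓝 0) (𝓝 0) := by
      simpa using (continuous_const_mul γ).norm.tendsto 0
    exact this.eventually (gt_mem_nhds one_pos)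
  filter_upwards [hsmall α, hsmall β] with z hα hβ
  have hfactor : 1 + t * z ^ 2 - z * (α + β) = (1 - α * z) * (1 - β * z) := by
    rw [← hαβ]; ring
  rw [hfactor, Complex.log_mul_of_re_pos (Complex.re_one_sub_pos hα) (Complex.re_one_sub_pos hβ),
    neg_add]
  convert (Complex.hasSum_taylorSeries_neg_log' hα).add (Complex.hasSum_taylorSeries_neg_log' hβ)
    using 2 with k
  rw [modCheb_eval_add t hαβ]
  ring

theorem stmt_5_general (n : ℕ) (t : ℝ)
    (A : Matrix (Fin n) (Fin n) ℂ) :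
    ∃ ε > (0 : ℝ), ∀ z : ℂ, ‖z‖ < ε →
      Summable (fun k : ℕ =>
        Matrix.trace (Polynomial.aeval A (modCheb t (k + 1))) * z ^ (k + 1) / (k + 1)) ∧
      Matrix.det ((1 + (t : ℂ) * z ^ 2) • (1 : Matrix (Fin n) (Fin n) ℂ) - z • A)
        = Complex.exp (-∑' k : ℕ,
            Matrix.trace (Polynomial.aeval A (modCheb t (k + 1))) * z ^ (k + 1) / (k + 1)) := by
  set σ := A.charpoly.roots
  have hlocal : ∀ᶠ z in 𝓝 (0 : ℂ), ∀ μ ∈ σ,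
      HasSum (fun k : ℕ ↦ (modCheb t (k + 1)).eval μ * z ^ (k + 1) / (k + 1))
        (-Complex.log (1 + t * z ^ 2 - z * μ)) ∧ 1 + t * z ^ 2 - z * μ ≠ 0 := by
    have hne (μ : ℂ) : ∀ᶠ z in 𝓝 (0 : ℂ), 1 + t * z ^ 2 - z * μ ≠ 0 :=
      (by fun_prop : Continuous fun z : ℂ ↦ 1 + t * z ^ 2 - z * μ).continuousAt.eventually_ne
        (by simp)
    simpa using (eventually_all_finset σ.toFinset).2 fun μ _ ↦
      (eventually_hasSum_modCheb_eval t μ).and (hne μ)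
  obtain ⟨ε, hε, hball⟩ := Metric.eventually_nhds_iff.1 hlocal
  refine ⟨ε, hε, fun z hz ↦ ?_⟩
  have hzσ : ∀ μ ∈ σ, _ := hball (by simpa using hz)
  have hsum := σ.hasSum_sum_map fun μ hμ ↦ (hzσ μ hμ).1
  have hseries : (fun k : ℕ ↦ (aeval A (modCheb t (k + 1))).trace * z ^ (k + 1) / (k + 1)) =
      fun k ↦ (σ.map fun μ ↦ (modCheb t (k + 1)).eval μ * z ^ (k + 1) / (k + 1)).sum := by
    funext k
    rw [trace_aeval_eq_sum_roots_charpoly, Multiset.sum_map_div, Multiset.sum_map_mul_right]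
  rw [hseries, hsum.tsum_eq, det_smul_one_sub_smul_eq_prod_roots_charpoly, ← Multiset.sum_map_neg,
    Complex.exp_multiset_sum, Multiset.map_map]
  refine ⟨hsum.summable, congrArg _ (Multiset.map_congr rfl fun μ hμ ↦ ?_)⟩
  simp [Complex.exp_log (hzσ μ hμ).2]

/-- For `n ≥ 1`, `t ∈ [0,1]` and any `n×n` complex matrix `A`, there is `ε > 0` such that
for `|z| < ε` the series `Σ_{k≥1} Tr[P_k^{(t)}(A)] z^k/k` converges and
`det(I + t z² − z A) = exp(−Σ_{k≥1} Tr[P_k^{(t)}(A)] z^k/k)`. -/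
theorem stmt_5 (n : ℕ) (hn : 1 ≤ n) (t : ℝ) (ht0 : 0 ≤ t) (ht1 : t ≤ 1)
    (A : Matrix (Fin n) (Fin n) ℂ) :
    ∃ ε > (0 : ℝ), ∀ z : ℂ, ‖z‖ < ε →
      Summable (fun k : ℕ =>
        Matrix.trace (Polynomial.aeval A (modCheb t (k + 1))) * z ^ (k + 1) / (k + 1)) ∧
      Matrix.det ((1 + (t : ℂ) * z ^ 2) • (1 : Matrix (Fin n) (Fin n) ℂ) - z • A)
        = Complex.exp (-∑' k : ℕ,
            Matrix.trace (Polynomial.aeval A (modCheb t (k + 1))) * z ^ (k + 1) / (k + 1)) :=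
  stmt_5_general n t A
end

section
/- For all integers k > l ≥ 1, one has Σ_{r=0}^{k−l} ( (−1)^r / (2k − r) ) · binom(2(k−r), k−r−l) · binom(2k−r, r) = 0. -/
/-!
Write `n = 2k`, `m = k - l`. The absorption identity
`n / (n - r) * C(n - r, r) = C(n - r, r) + C(n - r - 1, r - 1)` splits `n` times the sum into
`S(n, m) - S(n - 2, m - 1)`, where `S(n, m) = ∑ r ≤ m, (-1)^r C(n - 2r, m - r) C(n - r, r)`.
Since `C(n - r, r) C(n - 2r, m - r) = C(m, r) C(n - r, m)`, each `S(n, m)` is the `m`-th forward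
difference of `x ↦ C(x, m)`, which is `1`.
-/

open Finset

theorem sum_range_neg_one_pow_mul_choose_mul_choose_sub {m n : ℕ} (h : m ≤ n) :
    ∑ r ∈ range (m + 1), (-1 : ℤ) ^ r * m.choose r * (n - r).choose m = 1 := by
  have key := congr_fun (fwdDiff_iter_choose 0 m) (n - m)
  rw [fwdDiff_iter_eq_sum_shift] at key
  simp only [add_zero, Nat.choose_zero_right, Nat.cast_one, smul_eq_mul, mul_one] at key
  rw [← sum_range_reflect]
  refine (sum_congr rfl fun j hj => ?_).trans key
  have hj : j ≤ m := Nat.lt_succ_iff.mp (mem_range.mp hj)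
  rw [add_tsub_cancel_right, Nat.choose_symm hj, show n - (m - j) = n - m + j by omega]

theorem sum_range_neg_one_pow_mul_choose_sub_two_mul_mul_choose {R : Type*} [Ring R] {m n : ℕ}
    (h : m ≤ n) :
    ∑ r ∈ range (m + 1), (-1 : R) ^ r * (n - 2 * r).choose (m - r) * (n - r).choose r = 1 := by
  suffices ∑ r ∈ range (m + 1), (-1 : ℤ) ^ r * (n - 2 * r).choose (m - r) * (n - r).choose r = 1 by
    exact_mod_cast congrArg (Int.cast : ℤ → R) this
  refine (sum_congr rfl fun r hr => ?_).trans (sum_range_neg_one_pow_mul_choose_mul_choose_sub h)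
  rw [mul_assoc, mul_assoc, ← Nat.cast_mul, ← Nat.cast_mul, mul_comm (m.choose r),
    Nat.choose_mul (Nat.lt_succ_iff.mp (mem_range.mp hr)), Nat.sub_sub, ← two_mul]
  push_cast
  ring

theorem cast_div_mul_choose_sub {K : Type*} [Field K] [CharZero K] {r n : ℕ} (hr : 0 < r)
    (hrn : r < n) :
    (n : K) / (n - r : ℕ) * (n - r).choose r = (n - r).choose r + (n - r - 1).choose (r - 1) := by
  obtain ⟨s, rfl⟩ : ∃ s, r = s + 1 := ⟨r - 1, by omega⟩
  obtain ⟨N, rfl⟩ : ∃ N, n = N + 1 + (s + 1) := ⟨n - (s + 2), by omega⟩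
  have hN : ((N + 1 : ℕ) : K) ≠ 0 := Nat.cast_ne_zero.mpr N.succ_ne_zero
  rw [Nat.add_sub_cancel, Nat.add_sub_cancel, Nat.add_sub_cancel, div_mul_eq_mul_div,
    div_eq_iff hN]
  have := congrArg (Nat.cast : ℕ → K) (Nat.add_one_mul_choose_eq N s)
  push_cast at this ⊢
  linear_combination -this


theorem sum_range_neg_one_pow_div_mul_choose_sub_two_mul_mul_choose {K : Type*} [Field K]
    [CharZero K] {m n : ℕ} (hm : 0 < m) (hmn : m < n) :
    ∑ r ∈ range (m + 1), (-1 : K) ^ r / (n - r : ℕ) * (n - 2 * r).choose (m - r) *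
      (n - r).choose r = 0 := by
  have hn : (n : K) ≠ 0 := Nat.cast_ne_zero.mpr (by omega)
  have h₁ := sum_range_neg_one_pow_mul_choose_sub_two_mul_mul_choose (R := K) hmn.le
  have h₂ := sum_range_neg_one_pow_mul_choose_sub_two_mul_mul_choose (R := K)
    (show m - 1 ≤ n - 2 by omega)
  rw [Nat.sub_add_cancel hm] at h₂
  rw [sum_range_succ'] at h₁
  refine (mul_eq_zero.mp ?_).resolve_left hn
  rw [mul_sum, sum_range_succ']
  have hshift : ∀ s ∈ range m, (n : K) * ((-1) ^ (s + 1) / (n - (s + 1) : ℕ) *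
      (n - 2 * (s + 1)).choose (m - (s + 1)) * (n - (s + 1)).choose (s + 1)) =
      (-1) ^ (s + 1) * (n - 2 * (s + 1)).choose (m - (s + 1)) * (n - (s + 1)).choose (s + 1) -
        (-1) ^ s * (n - 2 - 2 * s).choose (m - 1 - s) * (n - 2 - s).choose s := by
    intro s hs
    have hsn : s + 1 < n := by have := mem_range.mp hs; omega
    have h := cast_div_mul_choose_sub (K := K) s.add_one_pos hsn
    rw [Nat.add_sub_cancel] at h
    rw [show n - 2 - 2 * s = n - 2 * (s + 1) by omega, show m - 1 - s = m - (s + 1) by omega,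
      show n - 2 - s = n - (s + 1) - 1 by omega]
    linear_combination (-1 : K) ^ (s + 1) * ((n - 2 * (s + 1)).choose (m - (s + 1)) : K) * h
  rw [sum_congr rfl hshift, sum_sub_distrib, h₂]
  simp only [mul_zero, Nat.sub_zero, pow_zero, one_mul, Nat.choose_zero_right, Nat.cast_one,
    mul_one] at h₁ ⊢
  rw [one_div, ← mul_assoc, mul_inv_cancel₀ hn, one_mul]
  linear_combination h₁

theorem stmt_13_general (k l : ℕ) (hkl : l < k) :
    ∑ r ∈ Finset.range (k - l + 1),
      ((-1 : ℚ) ^ r / ((2 * k - r : ℕ) : ℚ) *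
        (((2 * (k - r)).choose (k - r - l) : ℚ)) * (((2 * k - r).choose r : ℚ))) = 0 := by
  simp_rw [Nat.mul_sub, Nat.sub_right_comm k _ l]
  exact sum_range_neg_one_pow_div_mul_choose_sub_two_mul_mul_choose (by omega) (by omega)

/-- For all integers `k > l ≥ 1`,
`Σ_{r=0}^{k−l} ((−1)^r / (2k − r)) · binom(2(k−r), k−r−l) · binom(2k−r, r) = 0`. -/
theorem stmt_13 (k l : ℕ) (hl : 1 ≤ l) (hkl : l < k) :
    ∑ r ∈ Finset.range (k - l + 1),
      ((-1 : ℚ) ^ r / ((2 * k - r : ℕ) : ℚ) *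
        (((2 * (k - r)).choose (k - r - l) : ℚ)) * (((2 * k - r).choose r : ℚ))) = 0 :=
  stmt_13_general k l hkl
end

section
/- For every real t > 0 and every integer m ≥ 0, ∫_{−2√t}^{2√t} x^{2m} · (1/(2πt)) √(4t − x²) dx = C_m · t^m, where C_m = binom(2m, m)/(m+1) is the m-th Catalan number. In particular the density (1/(2πt)) √(4t − x²) on [−2√t, 2√t] integrates to 1. -/
open Real intervalIntegral

/-!
Substituting `x = r sin θ` turns `∫_{-r}^{r} x^{2m} √(r² - x²) dx` into
`r^{2m+2} ∫ sin^{2m} θ cos² θ dθ = r^{2m+2} (W_m - W_{m+1})` over `[-π/2, π/2]`, where by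
π-periodicity `W_k = ∫_0^π sin^{2k} = π binom(2k, k) / 4^k` is a Wallis integral. Since
`binom(2m+2, m+1) = 2(2m+1) C_m` and `binom(2m, m) = (m+1) C_m`, the difference is
`π C_m / (2·4^m)`; with `r = 2√t` this gives `C_m t^m`.
-/

open Finset in
theorem prod_range_odd_div_even_eq_centralBinom_div (m : ℕ) :
    ∏ i ∈ range m, (2 * (i : ℝ) + 1) / (2 * i + 2) = m.centralBinom / 4 ^ m := by
  induction m with
  | zero => simp
  | succ k ih =>
    have hk : ((k : ℝ) + 1) * (k + 1).centralBinom = 2 * (2 * k + 1) * k.centralBinom := by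
      exact_mod_cast Nat.succ_mul_centralBinom_succ k
    rw [prod_range_succ, ih]
    field_simp
    linear_combination (-2 * (4 : ℝ) ^ k) * hk

theorem integral_sin_pow_even_eq_centralBinom (m : ℕ) :
    ∫ x in 0..π, sin x ^ (2 * m) = π * m.centralBinom / 4 ^ m := by
  rw [integral_sin_pow_even, prod_range_odd_div_even_eq_centralBinom_div, mul_div_assoc]

theorem periodic_sin_pow_even (m : ℕ) : Function.Periodic (fun x => sin x ^ (2 * m)) π := by
  intro x
  simp only [sin_add_pi, pow_mul, neg_sq]

theorem centralBinom_succ_eq_mul_catalan (m : ℕ) :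
    (m + 1).centralBinom = 2 * (2 * m + 1) * catalan m := by
  have h := Nat.succ_mul_centralBinom_succ m
  rw [← succ_mul_catalan_eq_centralBinom m] at h
  exact Nat.eq_of_mul_eq_mul_left (by positivity : 0 < m + 1) (by rw [h]; ring)

theorem integral_pow_even_mul_sqrt_one_sub_sq (m : ℕ) :
    ∫ u in (-1 : ℝ)..1, u ^ (2 * m) * √(1 - u ^ 2) = π * catalan m / (2 * 4 ^ m) := by
  have hπ : -(π / 2) ≤ π / 2 := by linarith [pi_pos]
  have hshift : ∀ k : ℕ,
      ∫ x in -(π / 2)..π / 2, sin x ^ (2 * k) = ∫ x in 0..π, sin x ^ (2 * k) := by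
    intro k
    simpa [show -(π / 2) + π = π / 2 by ring] using
      (periodic_sin_pow_even k).intervalIntegral_add_eq (-(π / 2)) 0
  have hint : ∀ k : ℕ, IntervalIntegrable (fun x => sin x ^ (2 * k)) MeasureTheory.volume
      (-(π / 2)) (π / 2) :=
    fun k => (continuous_sin.pow _).intervalIntegrable _ _
  have hcentral : (m.centralBinom : ℝ) = (m + 1) * catalan m := by
    exact_mod_cast (succ_mul_catalan_eq_centralBinom m).symm
  have hcentral_succ : ((m + 1).centralBinom : ℝ) = 2 * (2 * m + 1) * catalan m := by
    exact_mod_cast centralBinom_succ_eq_mul_catalan m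
  calc ∫ u in (-1 : ℝ)..1, u ^ (2 * m) * √(1 - u ^ 2)
      = ∫ u in sin (-(π / 2))..sin (π / 2), u ^ (2 * m) * √(1 - u ^ 2) := by
        rw [sin_neg, sin_pi_div_two]
    _ = ∫ x in -(π / 2)..π / 2, sin x ^ (2 * m) * √(1 - sin x ^ 2) * cos x :=
        (integral_comp_mul_deriv (fun x _ => hasDerivAt_sin x) continuousOn_cos
          (by fun_prop)).symm
    _ = ∫ x in -(π / 2)..π / 2, sin x ^ (2 * m) - sin x ^ (2 * (m + 1)) := by
        refine integral_congr fun x hx => ?_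
        rw [Set.uIcc_of_le hπ] at hx
        rw [← cos_eq_sqrt_one_sub_sin_sq hx.1 hx.2, mul_assoc, ← sq, cos_sq']
        ring
    _ = π * catalan m / (2 * 4 ^ m) := by
        rw [integral_sub (hint m) (hint (m + 1)), hshift, hshift,
          integral_sin_pow_even_eq_centralBinom, integral_sin_pow_even_eq_centralBinom,
          hcentral, hcentral_succ]
        field_simp
        ring

theorem integral_pow_even_mul_sqrt_sq_sub_sq {r : ℝ} (hr : 0 ≤ r) (m : ℕ) :
    ∫ x in -r..r, x ^ (2 * m) * √(r ^ 2 - x ^ 2) =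
      π * catalan m * r ^ (2 * m + 2) / (2 * 4 ^ m) := by
  have hscale : ∀ u : ℝ, (r * u) ^ (2 * m) * √(r ^ 2 - (r * u) ^ 2)
      = r ^ (2 * m + 1) * (u ^ (2 * m) * √(1 - u ^ 2)) := by
    intro u
    rw [show r ^ 2 - (r * u) ^ 2 = r ^ 2 * (1 - u ^ 2) by ring, sqrt_mul (sq_nonneg r),
      sqrt_sq hr]
    ring
  have hsubst := smul_integral_comp_mul_left (fun x => x ^ (2 * m) * √(r ^ 2 - x ^ 2)) r
    (a := -1) (b := 1)
  rw [mul_neg_one, mul_one] at hsubst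
  simp only [← hsubst, hscale, integral_const_mul, integral_pow_even_mul_sqrt_one_sub_sq,
    smul_eq_mul]
  ring

/-- For every real `t > 0` and every integer `m ≥ 0`,
`∫_{−2√t}^{2√t} x^{2m} · (1/(2πt)) √(4t − x²) dx = C_m · t^m`, where `C_m` is the `m`-th
Catalan number; in particular the density `(1/(2πt)) √(4t − x²)` integrates to `1`. -/
theorem stmt_15 (t : ℝ) (ht : 0 < t) (m : ℕ) :
    (∫ x in (-(2 * Real.sqrt t))..(2 * Real.sqrt t),
        x ^ (2 * m) * (1 / (2 * π * t)) * Real.sqrt (4 * t - x ^ 2)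
      = (catalan m : ℝ) * t ^ m)
    ∧ (∫ x in (-(2 * Real.sqrt t))..(2 * Real.sqrt t),
        (1 / (2 * π * t)) * Real.sqrt (4 * t - x ^ 2) = 1) := by
  have hr : (2 * √t) ^ 2 = 4 * t := by rw [mul_pow, sq_sqrt ht.le]; norm_num
  have moment : ∀ k : ℕ, ∫ x in (-(2 * √t))..(2 * √t),
      x ^ (2 * k) * (1 / (2 * π * t)) * √(4 * t - x ^ 2) = catalan k * t ^ k := by
    intro k
    simp_rw [mul_right_comm _ (1 / (2 * π * t)), integral_mul_const, ← hr,
      integral_pow_even_mul_sqrt_sq_sub_sq (by positivity : 0 ≤ 2 * √t), pow_add, pow_mul, hr]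
    field_simp
    ring
  exact ⟨moment m, by simpa using moment 0⟩
end

section
/- Let m ≥ 1 and n ≥ 1. The number of functions i : ℤ/(2m) → {1,…,n} such that the cardinality of the range of i equals m + 1 and the number of distinct unordered pairs {i(j), i(j+1)} for j ∈ ℤ/(2m) equals m, is exactly n(n−1)⋯(n−m) · C_m, where C_m = binom(2m, m)/(m+1) is the m-th Catalan number (the count being 0 when n ≤ m). -/
/-!
Unroll the closed walk to `I : ℕ → α` with `I (2m) = I 0`. A step to a vertex not seen before
also crosses an edge not seen before; as there are `m` new vertices and `m` distinct edges, the
first crossing of every edge discovers a vertex, so the edges are exactly those of the discovery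
tree (each vertex joined to the vertex from which it was first reached). A vertex `c` lies on the
ancestor chain of the current position iff the edge above `c` has been crossed an odd number of
times; since the walk is closed, every edge is crossed an even number of times, hence exactly
twice, and every step to an old vertex goes back to the parent. So the walk is the depth-first
contour of a plane tree with `m` edges: it is recorded by its Dyck word of discovery and return
steps together with the injective labelling of the `m + 1` vertices in discovery order, and a
stack machine rebuilds the walk from these data. This gives a bijection with Dyck words of
semilength `m` (counted by `catalan m`) times embeddings `Fin (m + 1) ↪ Fin n`.
-/

open Finset Nat

namespace Nat

variable {p q : ℕ → Prop} [DecidablePred p] [DecidablePred q]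

theorem count_congr_of_lt {n : ℕ} (h : ∀ k < n, p k ↔ q k) : count p n = count q n :=
  le_antisymm (count_mono_left fun k hk => (h k hk).1) (count_mono_left fun k hk => (h k hk).2)

theorem exists_lt_count_eq {t n : ℕ} (h : t < count p n) : ∃ k < n, p k ∧ count p k = t := by
  induction n with
  | zero => simp at h
  | succ n ih =>
    rcases lt_or_ge t (count p n) with ht | ht
    · obtain ⟨k, hk, hpk, hck⟩ := ih ht
      exact ⟨k, by omega, hpk, hck⟩
    · by_cases hpn : p n
      · rw [count_succ, if_pos hpn] at h
        exact ⟨n, by omega, hpn, by omega⟩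
      · rw [count_succ, if_neg hpn] at h
        omega

theorem of_count_eq_count {n : ℕ} (hpq : ∀ k < n, p k → q k) (h : count p n = count q n)
    {k : ℕ} (hk : k < n) (hq : q k) : p k := by
  rw [count_eq_card_filter_range, count_eq_card_filter_range] at h
  have hsub : {x ∈ range n | p x} ⊆ {x ∈ range n | q x} := fun x hx => by
    simp only [mem_filter, mem_range] at hx ⊢
    exact ⟨hx.1, hpq x hx.1 hx.2⟩
  have hmem : k ∈ {x ∈ range n | q x} := by simp [hk, hq]
  rw [← eq_of_subset_of_card_le hsub h.ge] at hmem
  exact (mem_filter.1 hmem).2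

end Nat

namespace DoubleTreeWalk

variable {α : Type*}

section Walk

variable [DecidableEq α] (I : ℕ → α)

def vertices (k : ℕ) : Finset α := (range (k + 1)).image I

def edge (k : ℕ) : Sym2 α := s(I k, I (k + 1))

def edges (k : ℕ) : Finset (Sym2 α) := (range k).image (edge I)

def IsNewVertex (k : ℕ) : Prop := I (k + 1) ∉ vertices I k

def IsNewEdge (k : ℕ) : Prop := edge I k ∉ edges I k

instance : DecidablePred (IsNewVertex I) := fun _ => inferInstanceAs (Decidable (_ ∉ _))

instance : DecidablePred (IsNewEdge I) := fun _ => inferInstanceAs (Decidable (_ ∉ _))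

lemma vertices_succ (k : ℕ) : vertices I (k + 1) = insert (I (k + 1)) (vertices I k) := by
  simp only [vertices, range_add_one, image_insert]

lemma edges_succ (k : ℕ) : edges I (k + 1) = insert (edge I k) (edges I k) := by
  simp only [edges, range_add_one, image_insert]

lemma apply_mem_vertices {j k : ℕ} (h : j ≤ k) : I j ∈ vertices I k :=
  mem_image_of_mem I (mem_range.2 (by omega))

lemma card_vertices (k : ℕ) : (vertices I k).card = count (IsNewVertex I) k + 1 := by
  induction k with
  | zero => simp [vertices]
  | succ k ih =>
    rw [vertices_succ, count_succ]
    by_cases h : IsNewVertex I k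
    · rw [card_insert_of_notMem h, ih, if_pos h]
    · rw [insert_eq_of_mem (of_not_not h), ih, if_neg h, add_zero]

lemma card_edges (k : ℕ) : (edges I k).card = count (IsNewEdge I) k := by
  induction k with
  | zero => simp [edges]
  | succ k ih =>
    rw [edges_succ, count_succ]
    by_cases h : IsNewEdge I k
    · rw [card_insert_of_notMem h, ih, if_pos h]
    · rw [insert_eq_of_mem (of_not_not h), ih, if_neg h, add_zero]

lemma sum_count_edge_eq (k : ℕ) : ∑ e ∈ edges I k, count (edge I · = e) k = k := by
  simp only [count_eq_card_filter_range]
  rw [← card_eq_sum_card_fiberwise (t := edges I k) fun j hj => mem_image_of_mem _ hj, card_range]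

lemma IsNewVertex.isNewEdge {k : ℕ} (h : IsNewVertex I k) : IsNewEdge I k := by
  intro he
  obtain ⟨j, hj, hje⟩ := mem_image.1 he
  rw [mem_range] at hj
  rcases Sym2.eq_iff.1 hje with ⟨-, h2⟩ | ⟨h1, -⟩
  · exact h (h2 ▸ apply_mem_vertices I (by omega))
  · exact h (h1 ▸ apply_mem_vertices I (by omega))

variable {I} {I' : ℕ → α} {k : ℕ}

lemma vertices_congr (h : ∀ j ≤ k, I j = I' j) : vertices I k = vertices I' k :=
  image_congr fun j hj => h j (by simp at hj; omega)

lemma edges_congr (h : ∀ j ≤ k, I j = I' j) : edges I k = edges I' k :=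
  image_congr fun j hj => by
    simp only [coe_range, Set.mem_Iio] at hj
    simp only [edge, h j (by omega), h (j + 1) (by omega)]

lemma isNewVertex_congr (h : ∀ j ≤ k + 1, I j = I' j) : IsNewVertex I k ↔ IsNewVertex I' k := by
  rw [IsNewVertex, IsNewVertex, h (k + 1) le_rfl, vertices_congr fun j hj => h j (by omega)]

end Walk

/-- A closed walk on `ℤ/(2m)`, unrolled to `ℕ`: only `I 0, …, I (2m)` matter. -/
structure IsDoubleTreeWalk [DecidableEq α] (I : ℕ → α) (m : ℕ) : Prop where
  closed : I (2 * m) = I 0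
  card_vertices_eq : (vertices I (2 * m)).card = m + 1
  card_edges_eq : (edges I (2 * m)).card = m

lemma IsDoubleTreeWalk.congr [DecidableEq α] {I I' : ℕ → α} {m : ℕ} (hI : IsDoubleTreeWalk I m)
    (h : ∀ k ≤ 2 * m, I k = I' k) : IsDoubleTreeWalk I' m where
  closed := by rw [← h _ le_rfl, ← h 0 (by omega), hI.closed]
  card_vertices_eq := by rw [← vertices_congr h, hI.card_vertices_eq]
  card_edges_eq := by rw [← edges_congr h, hI.card_edges_eq]

section DiscoveryTree

variable (I : ℕ → α)

/-- For a vertex the walk never visits this is the junk value `sInf ∅ = 0`. -/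
noncomputable def discTime (v : α) : ℕ := sInf {k | I k = v}

noncomputable def parent (v : α) : α := I (discTime I v - 1)

lemma discTime_le {k : ℕ} {v : α} (h : I k = v) : discTime I v ≤ k := Nat.sInf_le h

lemma apply_discTime (k : ℕ) : I (discTime I (I k)) = I k :=
  Nat.sInf_mem (s := {j | I j = I k}) ⟨k, rfl⟩

lemma discTime_apply_zero : discTime I (I 0) = 0 := Nat.le_zero.1 (discTime_le I rfl)

lemma discTime_parent_lt {v : α} (h : discTime I v ≠ 0) : discTime I (parent I v) < discTime I v :=
  (discTime_le I rfl).trans_lt (by omega)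

noncomputable def ancestors (v : α) : List α :=
  if h : discTime I v = 0 then [v] else
    have := discTime_parent_lt I h
    v :: ancestors (parent I v)
termination_by discTime I v

lemma ancestors_of_discTime_eq_zero {v : α} (h : discTime I v = 0) : ancestors I v = [v] := by
  rw [ancestors, dif_pos h]

lemma ancestors_of_discTime_ne_zero {v : α} (h : discTime I v ≠ 0) :
    ancestors I v = v :: ancestors I (parent I v) := by
  rw [ancestors, dif_neg h]

lemma ancestors_apply_zero : ancestors I (I 0) = [I 0] :=
  ancestors_of_discTime_eq_zero I (discTime_apply_zero I)

lemma headD_ancestors (v d : α) : (ancestors I v).headD d = v := by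
  by_cases h : discTime I v = 0
  · rw [ancestors_of_discTime_eq_zero I h]; rfl
  · rw [ancestors_of_discTime_ne_zero I h]; rfl

lemma ancestors_ne_nil (v : α) : ancestors I v ≠ [] := by
  by_cases h : discTime I v = 0
  · simp [ancestors_of_discTime_eq_zero I h]
  · simp [ancestors_of_discTime_ne_zero I h]

lemma discTime_le_of_mem_ancestors {u v : α} (hu : u ∈ ancestors I v) :
    discTime I u ≤ discTime I v := by
  induction v using ancestors.induct I with
  | case1 v h => rw [ancestors_of_discTime_eq_zero I h, List.mem_singleton] at hu; rw [hu]
  | case2 v h _ ih =>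
    rw [ancestors_of_discTime_ne_zero I h, List.mem_cons] at hu
    rcases hu with rfl | hu
    · exact le_rfl
    · exact (ih hu).trans (discTime_parent_lt I h).le

lemma not_mem_ancestors_parent {v : α} (h : discTime I v ≠ 0) : v ∉ ancestors I (parent I v) :=
  fun hv => (discTime_le_of_mem_ancestors I hv).not_gt (discTime_parent_lt I h)

noncomputable def parentEdge (v : α) : Sym2 α := s(parent I v, v)

lemma parentEdge_inj {c c' : α} (hc : discTime I c ≠ 0) (hc' : discTime I c' ≠ 0) :
    parentEdge I c = parentEdge I c' ↔ c = c' := by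
  refine ⟨fun h => ?_, congrArg _⟩
  rcases Sym2.eq_iff.1 h with ⟨-, h⟩ | ⟨h1, h2⟩
  · exact h
  · have h3 := discTime_parent_lt I hc
    have h4 := discTime_parent_lt I hc'
    rw [h1] at h3
    rw [← h2] at h4
    omega

/-- Crossing the tree edge above `c'` adds or removes `c'` from the ancestor chain and changes
nothing else. -/
lemma mem_ancestors_iff_of_parentEdge {a b c c' : α} (hc' : discTime I c' ≠ 0)
    (h : s(a, b) = parentEdge I c') :
    c ∈ ancestors I b ↔ (c ∈ ancestors I a ↔ c ≠ c') := by
  have hnot := not_mem_ancestors_parent I hc'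
  by_cases hcc : c = c' <;>
    rcases Sym2.eq_iff.1 h with ⟨rfl, rfl⟩ | ⟨rfl, rfl⟩ <;>
    rw [ancestors_of_discTime_ne_zero I hc'] <;> simp_all

variable [DecidableEq α] {I} {k : ℕ}

lemma IsNewVertex.discTime_eq (h : IsNewVertex I k) : discTime I (I (k + 1)) = k + 1 := by
  refine le_antisymm (discTime_le I rfl) (not_lt.1 fun hlt => h ?_)
  rw [← apply_discTime I (k + 1)]
  exact apply_mem_vertices I (by omega)

lemma IsNewVertex.parent_eq (h : IsNewVertex I k) : parent I (I (k + 1)) = I k := by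
  rw [parent, h.discTime_eq, Nat.add_sub_cancel]

lemma IsNewVertex.ancestors_eq (h : IsNewVertex I k) :
    ancestors I (I (k + 1)) = I (k + 1) :: ancestors I (I k) := by
  rw [ancestors_of_discTime_ne_zero I (by rw [h.discTime_eq]; omega), h.parent_eq]

end DiscoveryTree

section Structure

variable [DecidableEq α] {I : ℕ → α} {m : ℕ} (hI : IsDoubleTreeWalk I m)
include hI

lemma IsDoubleTreeWalk.count_isNewVertex : count (IsNewVertex I) (2 * m) = m := by
  have := card_vertices I (2 * m)
  rw [hI.card_vertices_eq] at this
  omega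

/-- New vertices need new edges, and there are `m` of each. -/
lemma IsDoubleTreeWalk.isNewVertex_of_isNewEdge {k : ℕ} (hk : k < 2 * m) (h : IsNewEdge I k) :
    IsNewVertex I k :=
  Nat.of_count_eq_count (p := IsNewVertex I) (fun _ _ => IsNewVertex.isNewEdge I)
    (by rw [hI.count_isNewVertex, ← card_edges, hI.card_edges_eq]) hk h

lemma IsDoubleTreeWalk.exists_edge_eq_parentEdge {k : ℕ} (hk : k < 2 * m) :
    ∃ c, discTime I c ≠ 0 ∧ edge I k = parentEdge I c := by
  set f := sInf {j | edge I j = edge I k}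
  have hfk : f ≤ k := Nat.sInf_le rfl
  have hf : edge I f = edge I k := Nat.sInf_mem (s := {j | edge I j = edge I k}) ⟨k, rfl⟩
  have hnew : IsNewEdge I f := fun hmem => by
    obtain ⟨j, hj, hje⟩ := mem_image.1 hmem
    have : f ≤ j := Nat.sInf_le (hje.trans hf)
    rw [mem_range] at hj
    omega
  have hv := hI.isNewVertex_of_isNewEdge (by omega) hnew
  exact ⟨I (f + 1), by rw [hv.discTime_eq]; omega, by rw [← hf, parentEdge, hv.parent_eq]; rfl⟩

lemma IsDoubleTreeWalk.mem_ancestors_iff_odd {c : α} (hc : discTime I c ≠ 0) {k : ℕ}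
    (hk : k ≤ 2 * m) :
    c ∈ ancestors I (I k) ↔ Odd (count (edge I · = parentEdge I c) k) := by
  induction k with
  | zero =>
    simp only [ancestors_apply_zero, List.mem_singleton, count_zero, Nat.not_odd_zero, iff_false]
    rintro rfl
    exact hc (discTime_apply_zero I)
  | succ k ih =>
    obtain ⟨c', hc', hkc'⟩ := hI.exists_edge_eq_parentEdge (k := k) (by omega)
    rw [mem_ancestors_iff_of_parentEdge I hc' hkc', ih (by omega), count_succ]
    by_cases hcc : c = c'
    · subst hcc
      simp [hkc', Nat.odd_add_one]
    · rw [if_neg (by rwa [hkc', parentEdge_inj I hc' hc, eq_comm])]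
      simp [hcc]

lemma IsDoubleTreeWalk.two_le_count_edge {k : ℕ} (hk : k < 2 * m) :
    2 ≤ count (edge I · = edge I k) (2 * m) := by
  have hpos := count_strict_mono (p := (edge I · = edge I k)) rfl hk
  obtain ⟨c, hc, hkc⟩ := hI.exists_edge_eq_parentEdge hk
  have hc0 : c ∉ ancestors I (I (2 * m)) := by
    rw [hI.closed, ancestors_apply_zero, List.mem_singleton]
    exact fun h => hc (h ▸ discTime_apply_zero I)
  rw [hI.mem_ancestors_iff_odd hc le_rfl, ← hkc, Nat.not_odd_iff_even] at hc0
  obtain ⟨r, hr⟩ := hc0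
  omega

lemma IsDoubleTreeWalk.count_edge_eq_two {e : Sym2 α} (he : e ∈ edges I (2 * m)) :
    count (edge I · = e) (2 * m) = 2 := by
  have hge : ∀ e ∈ edges I (2 * m), 2 ≤ count (edge I · = e) (2 * m) := fun e he => by
    obtain ⟨k, hk, rfl⟩ := mem_image.1 he
    exact hI.two_le_count_edge (mem_range.1 hk)
  have hsum : ∑ e ∈ edges I (2 * m), 2 = ∑ e ∈ edges I (2 * m), count (edge I · = e) (2 * m) := by
    rw [sum_count_edge_eq, sum_const, hI.card_edges_eq, smul_eq_mul, mul_comm]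
  exact ((sum_eq_sum_iff_of_le hge).1 hsum e he).symm

/-- The walk is a depth-first traversal of the discovery tree. -/
lemma IsDoubleTreeWalk.ancestors_of_not_isNewVertex {k : ℕ} (hk : k < 2 * m)
    (h : ¬IsNewVertex I k) : ancestors I (I k) = I k :: ancestors I (I (k + 1)) := by
  obtain ⟨c, hc, hkc⟩ := hI.exists_edge_eq_parentEdge hk
  have hold : edge I k ∈ edges I k := of_not_not (mt (hI.isNewVertex_of_isNewEdge hk) h)
  obtain ⟨j, hj, hjk⟩ := mem_image.1 hold
  rw [mem_range] at hj
  have h1 := count_strict_mono (p := (edge I · = edge I k)) hjk hj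
  have h2 := count_monotone (edge I · = edge I k) (show k + 1 ≤ 2 * m by omega)
  rw [count_succ, if_pos rfl, hI.count_edge_eq_two (mem_image_of_mem _ (mem_range.2 hk))] at h2
  have hodd : c ∈ ancestors I (I k) := by
    rw [hI.mem_ancestors_iff_odd hc hk.le, ← hkc]
    exact ⟨0, by omega⟩
  rcases Sym2.eq_iff.1 hkc with ⟨h1, -⟩ | ⟨h1, h2⟩
  · exact absurd (h1 ▸ hodd) (not_mem_ancestors_parent I hc)
  · rw [h1, h2, ← ancestors_of_discTime_ne_zero I hc]

end Structure

section Stack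

variable (up : ℕ → Prop) [DecidablePred up] (σ : ℕ → α)

/-- Reading `up k` as "step `k` goes up", the stack holds the path from the root to the current
vertex; the `t`-th up step pushes the label `σ t`. -/
def stack : ℕ → List α
  | 0 => [σ 0]
  | k + 1 => if up k then σ (count up k + 1) :: stack k else (stack k).tail

def decode (k : ℕ) : α := (stack up σ k).headD (σ 0)

lemma stack_succ_of_up {k : ℕ} (h : up k) :
    stack up σ (k + 1) = σ (count up k + 1) :: stack up σ k := if_pos h

lemma stack_succ_of_not_up {k : ℕ} (h : ¬up k) : stack up σ (k + 1) = (stack up σ k).tail :=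
  if_neg h

lemma decode_succ_of_up {k : ℕ} (h : up k) : decode up σ (k + 1) = σ (count up k + 1) := by
  rw [decode, stack_succ_of_up up σ h]
  rfl

lemma length_stack_add {k : ℕ} (h : ∀ j < k, stack up σ j ≠ []) :
    (stack up σ k).length + k = 2 * count up k + 1 := by
  induction k with
  | zero => rfl
  | succ k ih =>
    have hk := ih fun j hj => h j (by omega)
    have hne := List.length_pos_iff.2 (h k (by omega))
    by_cases hup : up k
    · rw [stack_succ_of_up up σ hup, List.length_cons, count_succ, if_pos hup]
      omega
    · rw [stack_succ_of_not_up up σ hup, List.length_tail, count_succ, if_neg hup]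
      omega

variable [DecidableEq α]

lemma mem_stack {k : ℕ} {v : α} (hv : v ∈ stack up σ k) :
    v ∈ (range (count up k + 1)).image σ := by
  induction k generalizing v with
  | zero => simp_all [stack]
  | succ k ih =>
    have hsub : range (count up k + 1) ⊆ range (count up (k + 1) + 1) :=
      range_subset_range.2 (by have := count_monotone up (show k ≤ k + 1 by omega); omega)
    by_cases hup : up k
    · rw [stack_succ_of_up up σ hup, List.mem_cons] at hv
      rcases hv with rfl | hv
      · exact mem_image_of_mem σ (by simp [count_succ, hup])
      · exact image_subset_image hsub (ih hv)
    · rw [stack_succ_of_not_up up σ hup] at hv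
      exact image_subset_image hsub (ih (List.mem_of_mem_tail hv))

lemma decode_mem (k : ℕ) : decode up σ k ∈ (range (count up k + 1)).image σ := by
  rw [decode]
  cases h : stack up σ k with
  | nil => exact mem_image_of_mem σ (by simp)
  | cons a l => exact mem_stack up σ (by simp [h])

lemma vertices_decode (k : ℕ) :
    vertices (decode up σ) k = (range (count up k + 1)).image σ := by
  induction k with
  | zero => rfl
  | succ k ih =>
    rw [vertices_succ, ih]
    by_cases hup : up k
    · rw [decode_succ_of_up up σ hup, count_succ, if_pos hup, range_add_one (n := count up k + 1),
        image_insert]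
    · have := decode_mem up σ (k + 1)
      rw [count_succ, if_neg hup, add_zero] at this ⊢
      exact insert_eq_of_mem this

lemma isChain_stack (k : ℕ) :
    (stack up σ k).IsChain fun a b => s(a, b) ∈ edges (decode up σ) k := by
  induction k with
  | zero => exact List.isChain_singleton _
  | succ k ih =>
    have hmono : ∀ ⦃a b : α⦄, s(a, b) ∈ edges (decode up σ) k →
        s(a, b) ∈ edges (decode up σ) (k + 1) := fun _ _ h => by
      rw [edges_succ]; exact mem_insert_of_mem h
    by_cases hup : up k
    · rw [stack_succ_of_up up σ hup]
      cases h : stack up σ k with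
      | nil => exact List.isChain_singleton _
      | cons a l =>
        refine List.IsChain.cons_cons ?_ (h ▸ ih.imp hmono)
        have ha : decode up σ k = a := by rw [decode, h]; rfl
        rw [edges_succ, edge, ha, decode_succ_of_up up σ hup, Sym2.eq_swap]
        exact mem_insert_self _ _
    · rw [stack_succ_of_not_up up σ hup]
      exact ih.tail.imp hmono

lemma isNewVertex_decode_iff {N : ℕ} (hσ : Set.InjOn σ (Set.Iic (count up N))) {k : ℕ}
    (hk : k < N) : IsNewVertex (decode up σ) k ↔ up k := by
  rw [IsNewVertex, vertices_decode]
  by_cases hup : up k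
  · have hle : count up k + 1 ≤ count up N := by
      have := count_monotone up (show k + 1 ≤ N from hk)
      rwa [count_succ, if_pos hup] at this
    simp only [hup, iff_true, decode_succ_of_up up σ hup, mem_image, mem_range, not_exists,
      not_and]
    intro t ht heq
    have := hσ (show t ≤ count up N by omega) (show count up k + 1 ≤ count up N from hle) heq
    omega
  · have := decode_mem up σ (k + 1)
    rw [count_succ, if_neg hup, add_zero] at this
    simpa [hup] using this

end Stack

/-- `up 0, …, up (2m - 1)` read as up/down steps form a Dyck path of semilength `m`. -/
structure IsBallot (up : ℕ → Prop) [DecidablePred up] (m : ℕ) : Prop where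
  le_two_mul_count : ∀ k ≤ 2 * m, k ≤ 2 * count up k
  count_eq : count up (2 * m) = m

section Ballot

variable {up : ℕ → Prop} [DecidablePred up] {m : ℕ} (hup : IsBallot up m) (σ : ℕ → α)
include hup

lemma IsBallot.length_stack_add {k : ℕ} (hk : k ≤ 2 * m) :
    (stack up σ k).length + k = 2 * count up k + 1 := by
  induction k with
  | zero => rfl
  | succ k ih =>
    have h := ih (by omega)
    have hb := hup.le_two_mul_count (k + 1) hk
    by_cases h' : up k
    · rw [stack_succ_of_up up σ h', List.length_cons, count_succ, if_pos h']
      omega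
    · rw [count_succ, if_neg h'] at hb
      rw [stack_succ_of_not_up up σ h', List.length_tail, count_succ, if_neg h']
      omega

lemma IsBallot.exists_stack_eq_cons_cons {k : ℕ} (hk : k < 2 * m) (h : ¬up k) :
    ∃ a b l, stack up σ k = a :: b :: l := by
  have h1 := hup.length_stack_add σ hk.le
  have h2 := hup.le_two_mul_count (k + 1) hk
  rw [count_succ, if_neg h] at h2
  match stack up σ k, h1 with
  | a :: b :: l, _ => exact ⟨a, b, l, rfl⟩
  | [], h1 | [_], h1 => simp only [List.length_nil, List.length_singleton] at h1; omega

lemma IsBallot.suffix_stack {k : ℕ} (hk : k ≤ 2 * m) : [σ 0] <:+ stack up σ k := by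
  induction k with
  | zero => exact List.suffix_refl _
  | succ k ih =>
    by_cases h : up k
    · rw [stack_succ_of_up up σ h]
      exact (ih (by omega)).trans (List.suffix_cons _ _)
    · obtain ⟨a, b, l, hl⟩ := hup.exists_stack_eq_cons_cons σ (by omega) h
      have ih := ih (by omega)
      rw [hl, List.suffix_cons_iff] at ih
      rw [stack_succ_of_not_up up σ h, hl]
      exact ih.resolve_left (by simp)

lemma IsBallot.decode_two_mul : decode up σ (2 * m) = σ 0 := by
  have hlen := hup.length_stack_add σ le_rfl
  rw [hup.count_eq] at hlen
  rw [decode, ((hup.suffix_stack σ le_rfl).eq_of_length (by simp; omega)).symm]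
  rfl

variable [DecidableEq α]

lemma IsBallot.card_edges_decode (hσ : Set.InjOn σ (Set.Iic m)) {k : ℕ} (hk : k ≤ 2 * m) :
    (edges (decode up σ) k).card = count up k := by
  induction k with
  | zero => rfl
  | succ k ih =>
    rw [edges_succ, count_succ, ← ih (by omega)]
    by_cases h : up k
    · have hnew := (isNewVertex_decode_iff up σ (N := 2 * m) (by rwa [hup.count_eq]) hk).2 h
      rw [card_insert_of_notMem hnew.isNewEdge, if_pos h]
    · obtain ⟨a, b, l, hl⟩ := hup.exists_stack_eq_cons_cons σ hk h
      have hab : edge (decode up σ) k = s(a, b) := by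
        simp only [edge, decode, stack_succ_of_not_up up σ h, hl]
        rfl
      have := isChain_stack up σ k
      rw [hl] at this
      rw [if_neg h, insert_eq_of_mem (hab ▸ this.rel), add_zero]

theorem IsBallot.isDoubleTreeWalk_decode (hσ : Set.InjOn σ (Set.Iic m)) :
    IsDoubleTreeWalk (decode up σ) m where
  closed := hup.decode_two_mul σ
  card_vertices_eq := by
    rw [vertices_decode, hup.count_eq, Finset.card_image_of_injOn, card_range]
    exact hσ.mono fun t ht => Nat.lt_succ_iff.1 (by simpa using ht)
  card_edges_eq := by rw [hup.card_edges_decode σ hσ le_rfl, hup.count_eq]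

theorem IsBallot.eq_of_decode_eq {up' : ℕ → Prop} [DecidablePred up'] (hup' : IsBallot up' m)
    {σ' : ℕ → α} (hσ : Set.InjOn σ (Set.Iic m)) (hσ' : Set.InjOn σ' (Set.Iic m))
    (h : ∀ k ≤ 2 * m, decode up σ k = decode up' σ' k) :
    (∀ k < 2 * m, up k ↔ up' k) ∧ ∀ t ≤ m, σ t = σ' t := by
  have hup_iff : ∀ k < 2 * m, up k ↔ up' k := fun k hk => by
    rw [← isNewVertex_decode_iff up σ (N := 2 * m) (by rwa [hup.count_eq]) hk,
      ← isNewVertex_decode_iff up' σ' (N := 2 * m) (by rwa [hup'.count_eq]) hk]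
    exact isNewVertex_congr fun j hj => h j (by omega)
  refine ⟨hup_iff, fun t ht => ?_⟩
  cases t with
  | zero => exact h 0 (by omega)
  | succ s =>
    obtain ⟨k, hk, hupk, hck⟩ :=
      exists_lt_count_eq (p := up) (show s < count up (2 * m) by rw [hup.count_eq]; omega)
    have hck' : count up' k = s := by
      rw [← count_congr_of_lt fun j hj => hup_iff j (by omega), hck]
    have := h (k + 1) hk
    rwa [decode_succ_of_up up σ hupk, decode_succ_of_up up' σ' ((hup_iff k hk).1 hupk), hck,
      hck'] at this

end Ballot

section Encoding

variable [DecidableEq α] (I : ℕ → α)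

noncomputable def discoveryOrder : ℕ → α
  | 0 => I 0
  | t + 1 => I (nth (IsNewVertex I) t + 1)

variable {I}

lemma discoveryOrder_count_add_one {k : ℕ} (h : IsNewVertex I k) :
    discoveryOrder I (count (IsNewVertex I) k + 1) = I (k + 1) := by
  rw [discoveryOrder, nth_count h]

lemma discoveryOrder_mem_vertices {t k : ℕ} (ht : t ≤ count (IsNewVertex I) k) :
    discoveryOrder I t ∈ vertices I k := by
  cases t with
  | zero => exact apply_mem_vertices I (Nat.zero_le k)
  | succ r =>
    obtain ⟨j, hj, hnew, rfl⟩ := exists_lt_count_eq (show r < count (IsNewVertex I) k by omega)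
    rw [discoveryOrder_count_add_one hnew]
    exact apply_mem_vertices I hj

lemma injOn_discoveryOrder (N : ℕ) :
    Set.InjOn (discoveryOrder I) (Set.Iic (count (IsNewVertex I) N)) := by
  suffices h : ∀ t t', t < t' → t' ≤ count (IsNewVertex I) N →
      discoveryOrder I t ≠ discoveryOrder I t' by
    intro t ht t' ht' heq
    rcases lt_trichotomy t t' with hlt | rfl | hlt
    · exact absurd heq (h t t' hlt ht')
    · rfl
    · exact absurd heq.symm (h t' t hlt ht)
  intro t t' htt' ht'
  obtain ⟨s, rfl⟩ : ∃ s, t' = s + 1 := ⟨t' - 1, by omega⟩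
  obtain ⟨k, -, hnew, rfl⟩ := exists_lt_count_eq (show s < count (IsNewVertex I) N by omega)
  rw [discoveryOrder_count_add_one hnew]
  exact fun heq => hnew (heq ▸ discoveryOrder_mem_vertices (by omega))

variable {m : ℕ} (hI : IsDoubleTreeWalk I m) {up : ℕ → Prop} [DecidablePred up] {σ : ℕ → α}
  (hup : ∀ k < 2 * m, up k ↔ IsNewVertex I k) (hσ : ∀ t ≤ m, σ t = discoveryOrder I t)
include hI hup hσ

theorem IsDoubleTreeWalk.stack_eq_ancestors {k : ℕ} (hk : k ≤ 2 * m) :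
    stack up σ k = ancestors I (I k) := by
  induction k with
  | zero => rw [ancestors_apply_zero, stack, hσ 0 (Nat.zero_le m), discoveryOrder]
  | succ k ih =>
    have ih := ih (by omega)
    by_cases h : IsNewVertex I k
    · have hc : count up k = count (IsNewVertex I) k :=
        count_congr_of_lt fun j hj => hup j (by omega)
      have hle := count_monotone (IsNewVertex I) hk
      rw [count_succ, if_pos h, hI.count_isNewVertex] at hle
      rw [stack_succ_of_up up σ ((hup k (by omega)).2 h), ih, hc, hσ _ hle,
        discoveryOrder_count_add_one h, h.ancestors_eq]
    · rw [stack_succ_of_not_up up σ (mt (hup k (by omega)).1 h), ih,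
        hI.ancestors_of_not_isNewVertex (by omega) h]
      rfl

theorem IsDoubleTreeWalk.decode_eq {k : ℕ} (hk : k ≤ 2 * m) : decode up σ k = I k := by
  rw [decode, hI.stack_eq_ancestors hup hσ hk, headD_ancestors]

end Encoding

theorem IsDoubleTreeWalk.isBallot_isNewVertex [DecidableEq α] {I : ℕ → α} {m : ℕ}
    (hI : IsDoubleTreeWalk I m) : IsBallot (IsNewVertex I) m where
  le_two_mul_count k hk := by
    have hstack : ∀ j ≤ k, stack (IsNewVertex I) (discoveryOrder I) j ≠ [] := fun j hj => by
      rw [hI.stack_eq_ancestors (fun _ _ => Iff.rfl) (fun _ _ => rfl) (by omega)]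
      exact ancestors_ne_nil I _
    have := length_stack_add (IsNewVertex I) (discoveryOrder I) fun j hj => hstack j hj.le
    have := List.length_pos_iff.2 (hstack k le_rfl)
    omega
  count_eq := hI.count_isNewVertex

section DyckWords

open DyckStep

def IsUpStep (l : List DyckStep) (k : ℕ) : Prop := l[k]? = some U

instance (l : List DyckStep) : DecidablePred (IsUpStep l) :=
  fun _ => inferInstanceAs (Decidable (_ = _))

lemma count_isUpStep (l : List DyckStep) (k : ℕ) : count (IsUpStep l) k = (l.take k).count U := by
  induction k with
  | zero => simp
  | succ k ih =>
    rw [count_succ, ih, List.take_add_one, List.count_append]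
    rcases h : l[k]? with _ | s
    · simp [IsUpStep, h]
    · rcases s.dichotomy with rfl | rfl <;> simp [IsUpStep, h]

lemma count_U_add_count_D (l : List DyckStep) : l.count U + l.count D = l.length := by
  induction l with
  | nil => rfl
  | cons s l ih => rcases s.dichotomy with rfl | rfl <;> simp <;> omega

lemma isBallot_isUpStep {p : DyckWord} {m : ℕ} (hp : p.semilength = m) :
    IsBallot (IsUpStep p.toList) m where
  le_two_mul_count k hk := by
    subst hp
    have h1 := p.count_D_le_count_U k
    have h2 := count_U_add_count_D (p.toList.take k)
    rw [List.length_take, ← DyckWord.two_mul_semilength_eq_length, min_eq_left hk] at h2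
    rw [count_isUpStep]
    omega
  count_eq := by
    rw [← hp, count_isUpStep, DyckWord.two_mul_semilength_eq_length, List.take_length]
    rfl

lemma _root_.DyckWord.ext_of_isUpStep {p q : DyckWord} (hpq : p.semilength = q.semilength)
    (h : ∀ k < 2 * p.semilength, IsUpStep p.toList k ↔ IsUpStep q.toList k) : p = q := by
  have hlen : p.toList.length = q.toList.length := by
    rw [← DyckWord.two_mul_semilength_eq_length, ← DyckWord.two_mul_semilength_eq_length, hpq]
  ext1
  refine List.ext_getElem hlen fun k hp hq => ?_
  have := h k (by rwa [DyckWord.two_mul_semilength_eq_length])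
  simp only [IsUpStep, List.getElem?_eq_getElem hp, List.getElem?_eq_getElem hq,
    Option.some.injEq] at this
  rcases (p.toList[k]).dichotomy with h1 | h1 <;> rcases (q.toList[k]).dichotomy with h2 | h2 <;>
    simp_all

variable (up : ℕ → Prop) [DecidablePred up] (m : ℕ)

def ballotList : List DyckStep := (List.range (2 * m)).map fun k => if up k then U else D

lemma length_ballotList : (ballotList up m).length = 2 * m := by simp [ballotList]

variable {up m}

lemma isUpStep_ballotList {k : ℕ} (hk : k < 2 * m) : IsUpStep (ballotList up m) k ↔ up k := by
  by_cases h : up k <;> simp [IsUpStep, ballotList, hk, h]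

lemma count_U_take_ballotList {k : ℕ} (hk : k ≤ 2 * m) :
    ((ballotList up m).take k).count U = count up k := by
  rw [← count_isUpStep]
  exact count_congr_of_lt fun j hj => isUpStep_ballotList (by omega)

lemma IsBallot.count_D_le_count_U_take_ballotList (h : IsBallot up m) (i : ℕ) :
    ((ballotList up m).take i).count D ≤ ((ballotList up m).take i).count U := by
  wlog hi : i ≤ 2 * m generalizing i
  · rw [List.take_of_length_le (by rw [length_ballotList]; omega)]
    simpa [List.take_of_length_le (length_ballotList up m).le] using this (2 * m) le_rfl
  have h1 := count_U_add_count_D ((ballotList up m).take i)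
  rw [List.length_take, length_ballotList, min_eq_left hi, count_U_take_ballotList hi] at h1
  rw [count_U_take_ballotList hi]
  have := h.le_two_mul_count i hi
  omega

lemma IsBallot.count_U_ballotList (h : IsBallot up m) : (ballotList up m).count U = m := by
  rw [← List.take_of_length_le (length_ballotList up m).le, count_U_take_ballotList le_rfl,
    h.count_eq]

def _root_.DyckWord.ofBallot (h : IsBallot up m) : DyckWord where
  toList := ballotList up m
  count_U_eq_count_D := by
    have := count_U_add_count_D (ballotList up m)
    rw [h.count_U_ballotList, length_ballotList] at this
    rw [h.count_U_ballotList]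
    omega
  count_D_le_count_U := h.count_D_le_count_U_take_ballotList

lemma _root_.DyckWord.semilength_ofBallot (h : IsBallot up m) : (DyckWord.ofBallot h).semilength = m :=
  h.count_U_ballotList

end DyckWords

section ZMod

variable {β : Type*}

lemma apply_val_natCast {N : ℕ} {J : ℕ → β} (hJ : J N = J 0) {k : ℕ} (hk : k ≤ N) :
    J (k : ZMod N).val = J k := by
  rcases hk.lt_or_eq with hk | rfl
  · rw [ZMod.val_natCast_of_lt hk]
  · rw [ZMod.natCast_self, ZMod.val_zero, hJ]

variable [DecidableEq β]

lemma image_univ_eq_vertices {N : ℕ} [NeZero N] (i : ZMod N → β) :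
    univ.image i = vertices (fun k : ℕ => i k) N := by
  ext b
  simp only [mem_image, mem_univ, true_and, vertices, mem_range]
  constructor
  · rintro ⟨j, rfl⟩
    exact ⟨j.val, Nat.lt_succ_of_lt (ZMod.val_lt j), congrArg i (ZMod.natCast_zmod_val j)⟩
  · rintro ⟨k, -, rfl⟩
    exact ⟨k, rfl⟩

lemma image_univ_sym2_eq_edges {N : ℕ} [NeZero N] (i : ZMod N → β) :
    univ.image (fun j => s(i j, i (j + 1))) = edges (fun k : ℕ => i k) N := by
  ext e
  simp only [mem_image, mem_univ, true_and, edges, edge, mem_range]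
  constructor
  · rintro ⟨j, rfl⟩
    exact ⟨j.val, ZMod.val_lt j, by simp⟩
  · rintro ⟨k, -, rfl⟩
    exact ⟨k, by simp⟩

lemma isDoubleTreeWalk_iff_zmod {m : ℕ} [NeZero (2 * m)] (i : ZMod (2 * m) → β) :
    ((univ.image i).card = m + 1 ∧ (univ.image fun j => s(i j, i (j + 1))).card = m) ↔
      IsDoubleTreeWalk (fun k : ℕ => i k) m := by
  rw [image_univ_eq_vertices, image_univ_sym2_eq_edges]
  refine ⟨fun h => ⟨?_, h.1, h.2⟩, fun h => ⟨h.card_vertices_eq, h.card_edges_eq⟩⟩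
  simp only [ZMod.natCast_self, Nat.cast_zero]

end ZMod

section Bijection

variable (m n : ℕ)

def labelling (σ : Fin (m + 1) ↪ Fin n) (t : ℕ) : Fin n := σ (Fin.clamp t m)

lemma labelling_val (σ : Fin (m + 1) ↪ Fin n) (t : Fin (m + 1)) : labelling m n σ t = σ t :=
  congrArg σ (Fin.ext (min_eq_left t.is_le))

lemma injOn_labelling (σ : Fin (m + 1) ↪ Fin n) : Set.InjOn (labelling m n σ) (Set.Iic m) :=
  fun t ht t' ht' h => by
    simpa [Fin.clamp, min_eq_left (show t ≤ m from ht), min_eq_left (show t' ≤ m from ht')]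
      using σ.injective h

variable {m n}

lemma isDoubleTreeWalk_decode (x : {p : DyckWord // p.semilength = m} × (Fin (m + 1) ↪ Fin n)) :
    IsDoubleTreeWalk (decode (IsUpStep x.1.1.toList) (labelling m n x.2)) m :=
  (isBallot_isUpStep x.1.2).isDoubleTreeWalk_decode _ (injOn_labelling m n x.2)

variable (m n) [NeZero (2 * m)]

def toWalk (x : {p : DyckWord // p.semilength = m} × (Fin (m + 1) ↪ Fin n)) :
    {i : ZMod (2 * m) → Fin n // (univ.image i).card = m + 1 ∧
      (univ.image fun j => s(i j, i (j + 1))).card = m} :=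
  ⟨fun j => decode (IsUpStep x.1.1.toList) (labelling m n x.2) j.val,
    (isDoubleTreeWalk_iff_zmod _).2 <| (isDoubleTreeWalk_decode x).congr fun _ hk =>
      (apply_val_natCast (isDoubleTreeWalk_decode x).closed hk).symm⟩

lemma toWalk_natCast (x : {p : DyckWord // p.semilength = m} × (Fin (m + 1) ↪ Fin n)) {k : ℕ}
    (hk : k ≤ 2 * m) :
    (toWalk m n x).1 k = decode (IsUpStep x.1.1.toList) (labelling m n x.2) k :=
  apply_val_natCast (isDoubleTreeWalk_decode x).closed hk

lemma toWalk_injective : Function.Injective (toWalk m n) := by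
  rintro ⟨⟨p, hp⟩, σ⟩ ⟨⟨q, hq⟩, τ⟩ h
  have hdecode : ∀ k ≤ 2 * m, decode (IsUpStep p.toList) (labelling m n σ) k =
      decode (IsUpStep q.toList) (labelling m n τ) k := fun k hk => by
    rw [← toWalk_natCast m n (⟨p, hp⟩, σ) hk, ← toWalk_natCast m n (⟨q, hq⟩, τ) hk, h]
  obtain ⟨hup, hlabel⟩ := (isBallot_isUpStep hp).eq_of_decode_eq _
    (isBallot_isUpStep hq) (injOn_labelling m n σ) (injOn_labelling m n τ) hdecode
  obtain rfl : p = q := DyckWord.ext_of_isUpStep (hp.trans hq.symm) (hp ▸ hup)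
  obtain rfl : σ = τ := DFunLike.ext _ _ fun t => by
    simpa only [labelling_val] using hlabel t t.is_le
  rfl

lemma toWalk_surjective : Function.Surjective (toWalk m n) := by
  rintro ⟨i, hi⟩
  have hI := (isDoubleTreeWalk_iff_zmod i).1 hi
  have hinj : Function.Injective fun t : Fin (m + 1) => discoveryOrder (fun k : ℕ => i k) t :=
    fun t t' h => Fin.ext <| injOn_discoveryOrder (2 * m)
      (by simpa [hI.count_isNewVertex] using t.is_le)
      (by simpa [hI.count_isNewVertex] using t'.is_le) h
  refine ⟨(⟨DyckWord.ofBallot hI.isBallot_isNewVertex, DyckWord.semilength_ofBallot _⟩,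
    ⟨_, hinj⟩), Subtype.ext (funext fun j => ?_)⟩
  exact (hI.decode_eq (fun _ hk => isUpStep_ballotList hk)
    (fun t ht => labelling_val m n _ ⟨t, by omega⟩) (ZMod.val_lt j).le).trans
    (congrArg i (ZMod.natCast_zmod_val j))

end Bijection

end DoubleTreeWalk

/-- For `m ≥ 1` and `n ≥ 1`, the number of closed walks `i : ℤ/(2m) → {1,…,n}` whose
directed multigraph is of double tree type (range of cardinality `m+1`, and exactly `m`
distinct unordered pairs `{i(j), i(j+1)}`) equals `n(n−1)⋯(n−m) · C_m`, where `C_m` is the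
`m`-th Catalan number. -/
theorem stmt_16 (m n : ℕ) (hm : 1 ≤ m) :
    letI : NeZero (2 * m) := ⟨by omega⟩
    Nat.card {i : ZMod (2 * m) → Fin n //
        (Finset.univ.image i).card = m + 1 ∧
        (Finset.univ.image (fun j : ZMod (2 * m) => s(i j, i (j + 1)))).card = m}
      = (∏ j ∈ Finset.range (m + 1), (n - j)) * catalan m := by
  have : NeZero (2 * m) := ⟨by omega⟩
  rw [← Nat.card_eq_of_bijective _
      ⟨DoubleTreeWalk.toWalk_injective m n, DoubleTreeWalk.toWalk_surjective m n⟩,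
    Nat.card_eq_fintype_card, Fintype.card_prod, DyckWord.card_dyckWord_semilength_eq_catalan,
    Fintype.card_embedding_eq, Fintype.card_fin, Fintype.card_fin,
    Nat.descFactorial_eq_prod_range, mul_comm]
end
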